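/- Fix γ > 0 and F ≥ 1 (F playing the role of the Fisher information F_g). For α ∈ ℝ with α² + 2α + F > 0, define λ_{h_α} = (2γ(1+α)(F+α) + γ²(α+F)²)/(α² + 2α + F), and set α_g = (−γF + √(4F + 4γF + γ²F²))/(2(1+γ)) and λ_g = γ + γ²F/2 + (γ/2)·√(4F + 4γF + γ²F²). Then: (i) λ_{h_{α_g}} = λ_g; (ii) λ_{h_α} ≤ λ_g for every admissible α; (iii) λ_{h_{√F}} = γ(1+√F) + (γ²/2)(F + √F) ≥ 2γ + γ²; and (iv) λ_g ≥ 2γ + γ²F ≥ 2γ + γ² = λ, where the inequality λ_g > λ is strict whenever F > 1. -/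

import Mathlib

/-! `λ_g` times the denominator of `λ_{h_α}` minus its numerator is a quadratic in `α`. Because
`α_g` is the positive root of `(1 + γ) α² + γ F α - F`, whose discriminant is
`Δ = 4F + 4γF + γ²F²`, this quadratic has a double root at `α_g`: it equals
`(γ/2) (√Δ + γF - 2 - 2γ) (α - α_g)²`. Its leading coefficient is nonnegative because
`Δ - (2 + 2γ - γF)² = 4 (1 + γ)² (F - 1) ≥ 0`, and the lower bounds on `λ_g` come from
`Δ - (2 + γF)² = 4 (F - 1)`. -/

set_option autoImplicit false

noncomputable section

/-- The effective SNR `λ_{h_α}` produced by the entrywise transformation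
`h_α = -g'/g + α·id` in the multiplicative spiked model with parameter `γ`,
where `F` is the Fisher information of the noise density. -/
def effSNR (γ F α : ℝ) : ℝ :=
  (2 * γ * (1 + α) * (F + α) + γ ^ 2 * (α + F) ^ 2) / (α ^ 2 + 2 * α + F)

/-- The optimal transformation parameter `α_g`. -/
def alphaOpt (γ F : ℝ) : ℝ :=
  (-(γ * F) + Real.sqrt (4 * F + 4 * γ * F + γ ^ 2 * F ^ 2)) / (2 * (1 + γ))

/-- The optimal effective SNR `λ_g`. -/
def lambdaOpt (γ F : ℝ) : ℝ :=
  γ + γ ^ 2 * F / 2 + γ / 2 * Real.sqrt (4 * F + 4 * γ * F + γ ^ 2 * F ^ 2)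

section

variable {γ F : ℝ}

local notation "Δ" => 4 * F + 4 * γ * F + γ ^ 2 * F ^ 2

lemma snr_discriminant_nonneg (hγ : 0 ≤ γ) (hF : 0 ≤ F) : 0 ≤ Δ := by
  positivity

lemma alphaOpt_isRoot (hγ : 1 + γ ≠ 0) (hΔ : 0 ≤ Δ) :
    (1 + γ) * (alphaOpt γ F * alphaOpt γ F) + γ * F * alphaOpt γ F + -F = 0 := by
  have hdiscrim : discrim (1 + γ) (γ * F) (-F) = Real.sqrt Δ * Real.sqrt Δ := by
    rw [Real.mul_self_sqrt hΔ, discrim]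
    ring
  exact (quadratic_eq_zero_iff hγ hdiscrim _).2 (Or.inl rfl)

lemma alphaOpt_pos (hγ : 0 ≤ γ) (hF : 0 < F) : 0 < alphaOpt γ F := by
  have hlt : γ * F < Real.sqrt Δ :=
    (Real.lt_sqrt (by positivity)).2 (by nlinarith)
  exact div_pos (by linarith) (by positivity)

lemma lambdaOpt_mul_sub_eq (hγ : 1 + γ ≠ 0) (hΔ : 0 ≤ Δ) (α : ℝ) :
    lambdaOpt γ F * (α ^ 2 + 2 * α + F) - (2 * γ * (1 + α) * (F + α) + γ ^ 2 * (α + F) ^ 2)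
      = γ / 2 * (Real.sqrt Δ + γ * F - 2 - 2 * γ) * (α - alphaOpt γ F) ^ 2 := by
  have hroot := alphaOpt_isRoot hγ hΔ
  set a := alphaOpt γ F with ha_def
  have ha : 2 * (1 + γ) * a = Real.sqrt Δ - γ * F := by
    rw [ha_def, alphaOpt]
    field_simp
    ring
  rw [lambdaOpt]
  linear_combination
    (2 * γ * α + γ * (1 - a)) * hroot - γ / 2 * (2 * α * (1 + a) + F - a ^ 2) * ha

lemma two_add_two_mul_sub_le_sqrt (hF : 1 ≤ F) : 2 + 2 * γ - γ * F ≤ Real.sqrt Δ :=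
  Real.le_sqrt_of_sq_le (by nlinarith [mul_nonneg (sq_nonneg (1 + γ)) (sub_nonneg.2 hF)])

lemma two_add_mul_le_sqrt (hF : 1 ≤ F) : 2 + γ * F ≤ Real.sqrt Δ :=
  Real.le_sqrt_of_sq_le (by nlinarith)

lemma effSNR_alphaOpt (hγ : 0 ≤ γ) (hF : 0 < F) :
    effSNR γ F (alphaOpt γ F) = lambdaOpt γ F := by
  have hpos := alphaOpt_pos hγ hF
  have hid := lambdaOpt_mul_sub_eq (by positivity) (snr_discriminant_nonneg hγ hF.le)
    (alphaOpt γ F)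
  rw [sub_self, zero_pow two_ne_zero, mul_zero, sub_eq_zero] at hid
  rw [effSNR, div_eq_iff (by positivity), hid]

lemma effSNR_le_lambdaOpt (hγ : 0 ≤ γ) (hF : 1 ≤ F) {α : ℝ} (hα : 0 < α ^ 2 + 2 * α + F) :
    effSNR γ F α ≤ lambdaOpt γ F := by
  have hid := lambdaOpt_mul_sub_eq (F := F) (by positivity)
    (snr_discriminant_nonneg hγ (by linarith)) α
  have hcoeff := two_add_two_mul_sub_le_sqrt (γ := γ) hF
  have hgap : 0 ≤ γ / 2 * (Real.sqrt Δ + γ * F - 2 - 2 * γ) * (α - alphaOpt γ F) ^ 2 := by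
    refine mul_nonneg (mul_nonneg ?_ ?_) (sq_nonneg _) <;> linarith
  rw [effSNR, div_le_iff₀ hα]
  linarith

lemma effSNR_sqrt (γ : ℝ) (hF : 0 < F) :
    effSNR γ F (Real.sqrt F) = γ * (1 + Real.sqrt F) + γ ^ 2 / 2 * (F + Real.sqrt F) := by
  have ht : 0 < Real.sqrt F := Real.sqrt_pos.2 hF
  have ht2 : Real.sqrt F ^ 2 = F := Real.sq_sqrt hF.le
  rw [effSNR, div_eq_iff (by positivity)]
  linear_combination (-(γ * (1 + Real.sqrt F) + γ ^ 2 / 2 * (F + Real.sqrt F))) * ht2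

lemma two_mul_add_sq_mul_le_lambdaOpt (hγ : 0 ≤ γ) (hF : 1 ≤ F) :
    2 * γ + γ ^ 2 * F ≤ lambdaOpt γ F := by
  have hs := two_add_mul_le_sqrt (γ := γ) hF
  rw [lambdaOpt]
  nlinarith

end

/-- **Algebraic optimization of the entrywise transformation for the multiplicative
model (Appendix B.5.2).** (i) `λ_{h_{α_g}} = λ_g`; (ii) `λ_{h_α} ≤ λ_g` for every
admissible `α`; (iii) `λ_{h_{√F}} = γ(1+√F) + (γ²/2)(F+√F) ≥ 2γ + γ²`;
(iv) `λ_g ≥ 2γ + γ²F ≥ 2γ + γ² = λ`, strictly if `F > 1`. -/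
theorem effective_snr_optimization
    (γ F : ℝ) (hγ : 0 < γ) (hF : 1 ≤ F) :
    effSNR γ F (alphaOpt γ F) = lambdaOpt γ F
    ∧ (∀ α : ℝ, 0 < α ^ 2 + 2 * α + F → effSNR γ F α ≤ lambdaOpt γ F)
    ∧ (effSNR γ F (Real.sqrt F)
        = γ * (1 + Real.sqrt F) + γ ^ 2 / 2 * (F + Real.sqrt F)
      ∧ 2 * γ + γ ^ 2 ≤ γ * (1 + Real.sqrt F) + γ ^ 2 / 2 * (F + Real.sqrt F))
    ∧ (2 * γ + γ ^ 2 * F ≤ lambdaOpt γ F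
      ∧ 2 * γ + γ ^ 2 ≤ 2 * γ + γ ^ 2 * F
      ∧ (1 < F → 2 * γ + γ ^ 2 < lambdaOpt γ F)) := by
  have hF0 : 0 < F := by linarith
  have hsqrt : 1 ≤ Real.sqrt F := Real.one_le_sqrt.2 hF
  have hlow := two_mul_add_sq_mul_le_lambdaOpt hγ.le hF
  refine ⟨effSNR_alphaOpt hγ.le hF0, fun α hα => effSNR_le_lambdaOpt hγ.le hF hα,
    ⟨effSNR_sqrt γ hF0, by nlinarith⟩, hlow, by nlinarith, fun hF1 => ?_⟩
  have : γ ^ 2 < γ ^ 2 * F := lt_mul_of_one_lt_right (by positivity) hF1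
  linarith

end
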